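/- Let a, b ≥ 0 and λ = {(i,j) : 0 ≤ i < a, 0 ≤ j ≤ 1} ∪ {(a+j, 0) : 0 ≤ j < b} (the Young diagram with Q_λ = (1+t₂)∑_{i=0}^{a−1}t₁^i + ∑_{j=0}^{b−1}t₁^{a+j}). Then the Laurent polynomial G := (1 − t₂^{−2})Q_λ + t₁⁻¹t₂⁻¹ Q̄_λ − (1 − t₁⁻¹)(1 − t₂⁻¹) Q_λ Q̄_λ equals ∑_{i=1}^{a} t₁^{−i} + (t₂^{−1} − t₂^{−2}) ∑_{j=0}^{b−1} t₁^{j} + ∑_{j=1}^{b} t₁^{−j} + t₂ ∑_{i=1}^{a} t₁^{−(b+i)}. -/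

import Mathlib

open AddMonoidAlgebra

/-- abbreviation for a Laurent monomial `t₁^k t₂^l` in `ℤ[t₁^{±1},t₂^{±1}] = ℤ[ℤ×ℤ]`. -/
noncomputable def mono (k l : ℤ) : AddMonoidAlgebra ℤ (ℤ × ℤ) :=
  AddMonoidAlgebra.single (k, l) 1

/-- `Q_λ = (1+t₂)∑_{i=0}^{a−1}t₁^i + ∑_{j=0}^{b−1}t₁^{a+j}` for the diagram of
the `(2,0)` case. -/
noncomputable def Q20 (a b : ℕ) : AddMonoidAlgebra ℤ (ℤ × ℤ) :=
  (∑ i ∈ Finset.range a, (mono (i : ℤ) 0 + mono (i : ℤ) 1)) +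
    ∑ j ∈ Finset.range b, mono ((a : ℤ) + (j : ℤ)) 0

/-- `Q̄_λ(t₁,t₂) = Q_λ(t₁⁻¹,t₂⁻¹)`. -/
noncomputable def Q20bar (a b : ℕ) : AddMonoidAlgebra ℤ (ℤ × ℤ) :=
  (∑ i ∈ Finset.range a, (mono (-(i : ℤ)) 0 + mono (-(i : ℤ)) (-1))) +
    ∑ j ∈ Finset.range b, mono (-((a : ℤ) + (j : ℤ))) 0

lemma mono_mul (k l m n : ℤ) : mono k l * mono m n = mono (k + m) (l + n) := by
  simp [mono, AddMonoidAlgebra.single_mul_single]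

lemma mono_zero : mono 0 0 = 1 := rfl

lemma one_sub_ne : (1 : AddMonoidAlgebra ℤ (ℤ × ℤ)) - mono 1 0 ≠ 0 := by
  intro h
  rw [sub_eq_zero, AddMonoidAlgebra.one_def, mono] at h
  rw [AddMonoidAlgebra.single_left_inj one_ne_zero] at h
  simp [Prod.ext_iff] at h

lemma telescope (n : ℕ) :
    (1 - mono 1 0) * ∑ i ∈ Finset.range n, mono (i : ℤ) 0 = 1 - mono (n : ℤ) 0 := by
  induction n with
  | zero => simp [mono_zero]
  | succ n ih =>
    rw [Finset.sum_range_succ, mul_add, ih, sub_mul, one_mul, mono_mul]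
    have : ((1:ℤ) + n) = ((n+1 : ℕ) : ℤ) := by push_cast; ring
    rw [this]
    ring_nf

lemma sum_neg (n : ℕ) :
    ∑ i ∈ Finset.range n, mono (-(i : ℤ)) 0
      = mono (1 - (n : ℤ)) 0 * ∑ i ∈ Finset.range n, mono (i : ℤ) 0 := by
  rw [Finset.mul_sum, ← Finset.sum_range_reflect (fun i => mono (-(i:ℤ)) 0) n]
  refine Finset.sum_congr rfl fun i hi => ?_
  rw [Finset.mem_range] at hi
  rw [mono_mul]
  congr 1
  have : ((n - 1 - i : ℕ) : ℤ) = (n:ℤ) - 1 - i := by omega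
  rw [this]
  omega

lemma sum_Icc_neg (n : ℕ) :
    ∑ i ∈ Finset.Icc 1 n, mono (-(i : ℤ)) 0
      = mono (-(n : ℤ)) 0 * ∑ i ∈ Finset.range n, mono (i : ℤ) 0 := by
  rw [← Finset.Ico_add_one_right_eq_Icc, Finset.sum_Ico_eq_sum_range, Nat.add_sub_cancel, Finset.mul_sum,
    ← Finset.sum_range_reflect (fun k => mono (-((1 + k : ℕ) : ℤ)) 0) n]
  refine Finset.sum_congr rfl fun i hi => ?_
  rw [Finset.mem_range] at hi
  rw [mono_mul]
  congr 1
  push_cast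
  omega

lemma sum_Icc_neg' (a b : ℕ) :
    ∑ i ∈ Finset.Icc 1 a, mono (-(b : ℤ) - (i : ℤ)) 0
      = mono (-(b : ℤ)) 0 * (mono (-(a : ℤ)) 0 *
          ∑ i ∈ Finset.range a, mono (i : ℤ) 0) := by
  rw [← sum_Icc_neg, Finset.mul_sum]
  refine Finset.sum_congr rfl fun i _ => ?_
  rw [mono_mul]
  congr 1 <;> ring

lemma hQ20 (a b : ℕ) :
    Q20 a b = (1 + mono 0 1) * (∑ i ∈ Finset.range a, mono (i : ℤ) 0)
      + mono (a : ℤ) 0 * ∑ i ∈ Finset.range b, mono (i : ℤ) 0 := by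
  rw [Q20, add_mul, one_mul, Finset.sum_add_distrib, Finset.mul_sum, Finset.mul_sum]
  congr 1
  · congr 1
    refine Finset.sum_congr rfl fun i _ => ?_
    rw [mono_mul]
    norm_num
  · refine Finset.sum_congr rfl fun i _ => ?_
    rw [mono_mul]
    norm_num

lemma hQ20bar (a b : ℕ) :
    Q20bar a b = (mono 1 0 * mono (-(a : ℤ)) 0) *
        ((1 + mono 0 (-1)) * ∑ i ∈ Finset.range a, mono (i : ℤ) 0)
      + (mono 1 0 * (mono (-(a : ℤ)) 0 * mono (-(b : ℤ)) 0)) *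
        ∑ i ∈ Finset.range b, mono (i : ℤ) 0 := by
  have hm1 : mono 1 0 * mono (-(a:ℤ)) 0 = mono (1 - (a:ℤ)) 0 := by
    rw [mono_mul]
    congr 1
  have hm2 : mono 1 0 * (mono (-(a:ℤ)) 0 * mono (-(b:ℤ)) 0)
      = mono (-(a:ℤ)) 0 * mono (1 - (b:ℤ)) 0 := by
    rw [mono_mul, mono_mul, mono_mul]
    congr 1 <;> ring
  rw [Q20bar, hm1, hm2, mul_left_comm, ← sum_neg]
  congr 1
  · rw [add_mul, one_mul, Finset.mul_sum, ← Finset.sum_add_distrib]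
    refine Finset.sum_congr rfl fun i _ => ?_
    congr 1
    rw [mono_mul]
    norm_num
  · rw [mul_assoc, ← sum_neg, Finset.mul_sum]
    refine Finset.sum_congr rfl fun i _ => ?_
    rw [mono_mul]
    congr 1 <;> ring

lemma key {R : Type*} [CommRing R] (u u' v v' al al' be be' X Y : R)
    (hu : u * u' = 1) (hv : v * v' = 1) (ha : al * al' = 1) (hb : be * be' = 1)
    (hX : (1 - u) * X = 1 - al) (hY : (1 - u) * Y = 1 - be) :
    (1 - u)^2 * ((1 - v' * v') * ((1 + v) * X + al * Y)
        + (u' * v') * ((u * al') * ((1 + v') * X) + (u * (al' * be')) * Y)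
      - (1 - u') * (1 - v') * ((1 + v) * X + al * Y)
          * ((u * al') * ((1 + v') * X) + (u * (al' * be')) * Y))
    = (1 - u)^2 * (al' * X + (v' - v' * v') * Y + be' * Y + v * (be' * (al' * X))) := by
  linear_combination ((1) + (-1) * al' + (-1) * v'^2 + v + (-1) * v * al' * be' + (-1) * v * v'^2 + (-1) * u + (-1) * u * al' * X + (-1) * u * al' * be' * Y + u * al * al' + (-1) * u * al * al' * Y + u * v' * al' * be' * Y + u * v'^2 + u * v'^2 * al' + u * v'^2 * al' * X + (-1) * u * v'^2 * al * al' + u * v'^2 * al * al' * Y + (-1) * u * v + (-1) * u * v * al' + (-1) * u * v * al' * X + u * v * al' * be' + (-1) * u * v * al' * be' * Y + u * v * al * al' + u * v * v' * al' * be' * Y + u * v * v'^2 + u * v * v'^2 * al' + u * v * v'^2 * al' * X + (-1) * u * v * v'^2 * al * al' + u * u' * al' + u * u' * al' * X + u * u' * al' * be' * Y + (-1) * u * u' * al * al' + u * u' * al * al' * Y + u * u' * v' * al' + (-1) * u * u' * v' * al' * be' * Y + (-1) * u * u' * v'^2 * al' * X + u * u' * v'^2 * al * al' + (-1) * u * u'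 * v'^2 * al * al' * Y + u * u' * v * al' + u * u' * v * al' * X + u * u' * v * al' * be' * Y + (-1) * u * u' * v * al * al' + (-1) * u * u' * v * v' * al' * be' * Y + (-1) * u * u' * v * v'^2 * al' + (-1) * u * u' * v * v'^2 * al' * X + u * u' * v * v'^2 * al * al' + u^2 * al' * X + u^2 * al' * be' * Y + u^2 * al * al' * Y + (-1) * u^2 * v' * al' * be' * Y + (-1) * u^2 * v'^2 * al' * X + (-1) * u^2 * v'^2 * al * al' * Y + u^2 * v * al' * X + u^2 * v * al' * be' * Y + (-1) * u^2 * v * v' * al' * be' * Y + (-1) * u^2 * v * v'^2 * al' * X + (-1) * u^2 * u' * al' * X + (-1) * u^2 * u' * al' * be' * Y + (-1) * u^2 * u' * al * al' * Y + (-1) * u^2 * u' * v' * al' + u^2 * u' * v' * al' * be' * Y + (-1) * u^2 * u' * v'^2 * al' + u^2 * u' * v'^2 * al' * X + u^2 * u' * v'^2 * al * al' * Y + (-1) * u^2 * u' * v * al' * X + (-1) * u^2 * u' * v * al' * be' * Y + u^2 * u' * v * v' * al' * be' * Y + u^2 * u' * v * v'^2 * al' * X) * hX + ((-1) * be' + al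 + (-1) * v' + v'^2 + (-1) * v'^2 * al + u * be' + (-1) * u * al' * be' + (-1) * u * al + (-1) * u * al * al' + (-1) * u * al * al' * be' * Y + u * al * al' * be * be' + u * al^2 * al' + u * v' + u * v' * al' * be' + u * v' * al * al' * be' * Y + (-1) * u * v' * al * al' * be * be' + (-1) * u * v'^2 + u * v'^2 * al + u * v'^2 * al * al' + (-1) * u * v'^2 * al^2 * al' + (-1) * u * v * al' * be' + u * v * al * al' * be' + u * v * v' * al' * be' + (-1) * u * v * v' * al * al' * be' + u * u' * al' * be' + u * u' * al * al' + u * u' * al * al' * be' * Y + (-1) * u * u' * al * al' * be * be' + (-1) * u * u' * al^2 * al' + (-1) * u * u' * v' * al * al' * be' * Y + u * u' * v' * al * al' * be * be' + (-1) * u * u' * v'^2 * al * al' + u * u' * v'^2 * al^2 * al' + u * u' * v * al' * be' + (-1) * u * u' * v * al * al' * be' + (-1) * u * u' * v * v' * al' * be' + u * u' * v * v' * al * al' * be' + u^2 * al * al' * be' * Y + (-1) * u^2 * v' * al * al' * be' * Y + (-1) * u^2 * u' * al * al' * be' * Y + (-1) * u^2 * u' * v' * al' * be' + u^2 * u' *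 v' * al * al' * be' * Y) * hY + (al' + al' * be' + (-1) * al' * be * be' + (-1) * al * al' + (-1) * al * al' * be + (-1) * al * al' * be * be' + al * al' * be^2 * be' + al^2 * al' * be + v' * al' + (-1) * v' * al * al' + v' * al * al' * be * be' + (-1) * v' * al * al' * be^2 * be' + v'^2 * al * al' * be + (-1) * v'^2 * al^2 * al' * be + v * al' + v * al' * be' + (-1) * v * al' * be * be' + (-2) * v * al * al' + (-1) * v * al * al' * be' + v * al * al' * be * be' + v * al^2 * al' + (-1) * v * v' * al' * be' + v * v' * al' * be * be' + v * v' * al * al' * be' + (-1) * v * v' * al * al' * be * be' + (-1) * v * v'^2 * al' + (2) * v * v'^2 * al * al' + (-1) * v * v'^2 * al^2 * al' + (-1) * u * v' * al' + (-1) * u * v' * al' * be' + u * v' * al' * be * be' + u * v' * al * al' + (-1) * u * v'^2 * al' + u * v'^2 * al * al') * hu + ((-1) * al' * be' + al' * be * be' + al * al' * be' + (-1) * al * al' * be * be' + (-1) * v' + (-1) * v' * al' + v' * al + (2) * v' * al * al' + (-1) * v' * al^2 * al' + u * al' * be' + (-1) * u * al' * be * be' + (-1) * u * al * al' * be' + u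 * al * al' * be * be' + u * v' + u * v' * al' + (-1) * u * v' * al + (-2) * u * v' * al * al' + u * v' * al^2 * al') * hv + (be' + (-1) * be + (-2) * be * be' + be^2 * be' + al * be + v' + v' * be * be' + (-1) * v' * be^2 * be' + (-1) * v' * al + v'^2 * be + (-1) * v'^2 * al * be + (-2) * v + v * be * be' + v * al + (-1) * u * be' + u * be + (2) * u * be * be' + (-1) * u * be^2 * be' + (-1) * u * al * be + (-1) * u * v' + (-1) * u * v' * be * be' + u * v' * be^2 * be' + u * v' * al + (0) * u * v'^2 + (-1) * u * v'^2 * be + u * v'^2 * al * be + (2) * u * v + (-1) * u * v * be * be' + (-1) * u * v * al) * ha + ((-1) + be + (0) * al' + v' + (-1) * v' * be + v + (-1) * v * al' + u + (-1) * u * be + (0) * u * al' + (-1) * u * v' + u * v' * be + (0) * u * v' * al' + (-1) * u * v + u * v * al') * hb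

/-- `G = (1 − t₂^{−2})Q_λ + t₁⁻¹t₂⁻¹ Q̄_λ − (1 − t₁⁻¹)(1 − t₂⁻¹) Q_λ Q̄_λ
  = ∑_{i=1}^{a} t₁^{−i} + (t₂^{−1} − t₂^{−2}) ∑_{j=0}^{b−1} t₁^{j}
    + ∑_{j=1}^{b} t₁^{−j} + t₂ ∑_{i=1}^{a} t₁^{−(b+i)}`. -/
theorem G_identity_two_zero (a b : ℕ) :
    (1 - mono 0 (-2)) * Q20 a b + mono (-1) (-1) * Q20bar a b -
      (1 - mono (-1) 0) * (1 - mono 0 (-1)) * Q20 a b * Q20bar a b =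
    (∑ i ∈ Finset.Icc 1 a, mono (-(i : ℤ)) 0) +
      (mono 0 (-1) - mono 0 (-2)) * (∑ j ∈ Finset.range b, mono (j : ℤ) 0) +
      (∑ j ∈ Finset.Icc 1 b, mono (-(j : ℤ)) 0) +
      mono 0 1 * ∑ i ∈ Finset.Icc 1 a, mono (-(b : ℤ) - (i : ℤ)) 0 := by
  have e2 : mono 0 (-2) = mono 0 (-1) * mono 0 (-1) := by
    rw [mono_mul]; norm_num
  have e1 : mono (-1) (-1) = mono (-1) 0 * mono 0 (-1) := by
    rw [mono_mul]; norm_num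
  have h1 : mono 1 0 * mono (-1) 0 = 1 := by
    rw [mono_mul]; norm_num [mono_zero]
  have h2 : mono 0 1 * mono 0 (-1) = 1 := by
    rw [mono_mul]; norm_num [mono_zero]
  have h3 : mono (a : ℤ) 0 * mono (-(a : ℤ)) 0 = 1 := by
    rw [mono_mul]; simp [mono_zero]
  have h4 : mono (b : ℤ) 0 * mono (-(b : ℤ)) 0 = 1 := by
    rw [mono_mul]; simp [mono_zero]
  apply mul_left_cancel₀ (pow_ne_zero 2 one_sub_ne)
  rw [hQ20, hQ20bar, sum_Icc_neg' a b, sum_Icc_neg a, sum_Icc_neg b, e1, e2]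
  linear_combination key (mono 1 0) (mono (-1) 0) (mono 0 1) (mono 0 (-1))
    (mono (a : ℤ) 0) (mono (-(a : ℤ)) 0) (mono (b : ℤ) 0) (mono (-(b : ℤ)) 0)
    (∑ i ∈ Finset.range a, mono (i : ℤ) 0) (∑ i ∈ Finset.range b, mono (i : ℤ) 0)
    h1 h2 h3 h4 (telescope a) (telescope b)
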